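/- Let d > r ≥ 1 be integers. Then m_e(Q_d, r) = m_e(Q_{d−1}, r) + m_e(Q_{d−1}, r−1). -/

import Mathlib

/-
For `r ≤ d` both sides equal the closed form `m_e(Q_d, r) = ∑_{k<r} (r - k) C(d, k)`, which
satisfies Pascal's recursion in `(d, r)`.

Upper bound, by induction on `d`: `Q_d` is two copies of `Q_{d-1}` joined by a perfect matching.
A set percolating at threshold `r` in the first copy infects all of it, hence every matching edge
(as `r ≤ d - 1`); each vertex of the second copy then carries one infected edge, so a set
percolating there at threshold `r - 1` finishes the job. For `r = d` take all edges.

Lower bound, by the polynomial method: colour each edge of `Q_d` by its direction. A function on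
edges recognized by vertex polynomials of degree `< r` that vanishes on a percolating set vanishes
everywhere, since the infection rule hands each polynomial `r` distinct roots. So `m_e(Q_d, r)` is
at least the dimension of that space, and the Walsh-twisted systems
`v ↦ χ_S(v) ∏_{j ∈ S} (X - j) X^k` (`#S + k < r`) are `∑_{k<r} (r - k) C(d, k)` independent
elements of it.
-/

open Polynomial

/-- A set `S` of edges is closed under the `r`-bond bootstrap infection rule: whenever a
vertex `v` is incident to at least `r` edges in `S`, all edges incident to `v` are in `S`. -/
def BondClosed {V : Type*} (G : SimpleGraph V) (r : ℕ) (S : Set (Sym2 V)) : Prop :=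
  ∀ v : V, r ≤ {u | G.Adj v u ∧ s(v, u) ∈ S}.ncard → ∀ w : V, G.Adj v w → s(v, w) ∈ S

/-- `F` percolates in the `r`-bond bootstrap process on `G`: every set of edges containing `F`
that is closed under the infection rule contains all edges of `G`. -/
def BondPercolates {V : Type*} (G : SimpleGraph V) (r : ℕ) (F : Set (Sym2 V)) : Prop :=
  ∀ S : Set (Sym2 V), F ⊆ S → BondClosed G r S → G.edgeSet ⊆ S

/-- `mEdge G r` is the minimum size of a set of edges of `G` percolating in the `r`-bond
bootstrap process, i.e. `m_e(G,r)`. -/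
noncomputable def mEdge {V : Type*} (G : SimpleGraph V) (r : ℕ) : ℕ :=
  sInf {n | ∃ F : Finset (Sym2 V), ↑F ⊆ G.edgeSet ∧ BondPercolates G r ↑F ∧ F.card = n}

/-- A set `S` of vertices is closed under the `r`-neighbour bootstrap infection rule. -/
def NeighClosed {V : Type*} (G : SimpleGraph V) (r : ℕ) (S : Set V) : Prop :=
  ∀ v : V, r ≤ {u | G.Adj v u ∧ u ∈ S}.ncard → v ∈ S

/-- `A` percolates in the `r`-neighbour bootstrap process on `G`. -/
def NeighPercolates {V : Type*} (G : SimpleGraph V) (r : ℕ) (A : Set V) : Prop :=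
  ∀ S : Set V, A ⊆ S → NeighClosed G r S → ∀ v : V, v ∈ S

/-- `mVertex G r` is the minimum size of a percolating set of vertices for the `r`-neighbour
bootstrap process, i.e. `m(G,r)`. -/
noncomputable def mVertex {V : Type*} (G : SimpleGraph V) (r : ℕ) : ℕ :=
  sInf {n | ∃ A : Finset V, NeighPercolates G r ↑A ∧ A.card = n}

/-- `c` is a proper edge colouring of `G`: distinct edges sharing an endpoint get distinct
colours. -/
def ProperEdgeColouring {V : Type*} (G : SimpleGraph V) (c : Sym2 V → ℝ) : Prop :=
  ∀ e₁ ∈ G.edgeSet, ∀ e₂ ∈ G.edgeSet, e₁ ≠ e₂ → (∃ v : V, v ∈ e₁ ∧ v ∈ e₂) → c e₁ ≠ c e₂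

/-- The space `W^r_{G,c}` of functions on edges recognized by systems of polynomials of degree
at most `r - 1` (degree `< r`) attached to the vertices. Functions are represented as functions
on `Sym2 V` vanishing outside the edge set of `G`. -/
noncomputable def Wspace {V : Type*} (G : SimpleGraph V) (c : Sym2 V → ℝ) (r : ℕ) :
    Submodule ℝ (Sym2 V → ℝ) where
  carrier := {φ | (∀ e, e ∉ G.edgeSet → φ e = 0) ∧
    ∃ p : V → ℝ[X], (∀ v, (p v).degree < (r : WithBot ℕ)) ∧
      ∀ v w : V, G.Adj v w → (p v).eval (c s(v, w)) = φ s(v, w)}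
  zero_mem' := ⟨fun _ _ => rfl, fun _ => 0,
    fun _ => by simp [Polynomial.degree_zero], fun _ _ _ => by simp⟩
  add_mem' := by
    rintro φ ψ ⟨hφ0, p, hp, hpe⟩ ⟨hψ0, q, hq, hqe⟩
    exact ⟨fun e he => by simp [hφ0 e he, hψ0 e he], fun v => p v + q v,
      fun v => lt_of_le_of_lt (Polynomial.degree_add_le _ _) (max_lt (hp v) (hq v)),
      fun v w hvw => by simp [hpe v w hvw, hqe v w hvw]⟩
  smul_mem' := by
    rintro a φ ⟨hφ0, p, hp, hpe⟩
    exact ⟨fun e he => by simp [hφ0 e he], fun v => a • p v,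
      fun v => lt_of_le_of_lt (Polynomial.degree_smul_le _ _) (hp v),
      fun v w hvw => by simp [hpe v w hvw]⟩

/-- The `d`-dimensional hypercube `Q_d`: vertices are vectors in `{0,1}^d` and two vertices are
adjacent iff they differ in exactly one coordinate. -/
def hypercube (d : ℕ) : SimpleGraph (Fin d → Bool) where
  Adj x y := ∃! i : Fin d, x i ≠ y i
  symm := by
    constructor
    rintro x y ⟨i, hi, hu⟩
    exact ⟨i, hi.symm, fun j hj => hu j hj.symm⟩
  loopless := by
    constructor
    rintro x ⟨i, hi, -⟩
    exact hi rfl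

open Finset Module

section BondPercolation

variable {V W : Type*}

section

variable (G : SimpleGraph V) (r : ℕ)

lemma mEdge_le_card {F : Finset (Sym2 V)} (hFG : ↑F ⊆ G.edgeSet)
    (hF : BondPercolates G r ↑F) : mEdge G r ≤ #F :=
  Nat.sInf_le ⟨F, hFG, hF, rfl⟩

lemma exists_bondPercolates_card_eq_mEdge [Finite V] :
    ∃ F : Finset (Sym2 V), ↑F ⊆ G.edgeSet ∧ BondPercolates G r ↑F ∧ #F = mEdge G r := by
  have hE := G.edgeSet.toFinite
  have hne :
      {n | ∃ F : Finset (Sym2 V), ↑F ⊆ G.edgeSet ∧ BondPercolates G r ↑F ∧ #F = n}.Nonempty :=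
    ⟨_, hE.toFinset, by simp, fun _ hS _ => by simpa using hS, rfl⟩
  exact Nat.sInf_mem hne

lemma mEdge_le_card_edgeFinset [Fintype V] [DecidableRel G.Adj] :
    mEdge G r ≤ #G.edgeFinset :=
  mEdge_le_card G r (by simp) fun _ hS _ => by simpa using hS

@[simp] lemma mEdge_zero : mEdge G 0 = 0 := by
  refine Nat.le_zero.1 (mEdge_le_card G 0 (F := ∅) (by simp) ?_)
  intro S _ hS e he
  induction e using Sym2.ind with
  | _ v w => exact hS v (Nat.zero_le _) w he

end

lemma BondClosed.comap [Finite V] {G : SimpleGraph V} {H : SimpleGraph W} (f : H ↪g G) {r k : ℕ}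
    {S : Set (Sym2 V)} (hS : BondClosed G r S)
    (hk : ∀ v, k ≤ {u | G.Adj (f v) u ∧ s(f v, u) ∈ S ∧ u ∉ Set.range f}.ncard) :
    BondClosed H (r - k) (Sym2.map f ⁻¹' S) := by
  intro v hv w hvw
  have hkv := hk v
  set A := {u | H.Adj v u ∧ s(v, u) ∈ Sym2.map f ⁻¹' S}
  set C := {u | G.Adj (f v) u ∧ s(f v, u) ∈ S ∧ u ∉ Set.range f}
  have hdisj : Disjoint (f '' A) C :=
    Set.disjoint_left.2 fun _ ⟨u, _, hu⟩ hC => hC.2.2 ⟨u, hu⟩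
  have hsub : f '' A ∪ C ⊆ {u | G.Adj (f v) u ∧ s(f v, u) ∈ S} := by
    rintro _ (⟨u, ⟨hu, huS⟩, rfl⟩ | ⟨hu, huS, -⟩)
    · exact ⟨f.map_adj_iff.2 hu, by simpa using huS⟩
    · exact ⟨hu, huS⟩
  have hcard : r ≤ {u | G.Adj (f v) u ∧ s(f v, u) ∈ S}.ncard := by
    refine le_trans ?_ (Set.ncard_le_ncard hsub)
    rw [Set.ncard_union_eq hdisj, Set.ncard_image_of_injective _ f.injective]
    omega
  simpa using hS (f v) hcard (f w) (f.map_adj_iff.2 hvw)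

end BondPercolation

open Polynomial

section PolynomialMethod

variable {V : Type*} {G : SimpleGraph V} {c : Sym2 V → ℝ} {r : ℕ}

lemma ProperEdgeColouring.injOn_neighborSet (hc : ProperEdgeColouring G c) (v : V) :
    Set.InjOn (fun u => c s(v, u)) (G.neighborSet v) := by
  intro u₁ h₁ u₂ h₂ hc₁₂
  by_contra hne
  exact hc _ h₁ _ h₂ (fun h => hne (Sym2.congr_right.1 h))
    ⟨v, Sym2.mem_mk_left _ _, Sym2.mem_mk_left _ _⟩ hc₁₂

/-- The edges at `v` have distinct colours, so `p` has at least `r` distinct roots. -/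
lemma ProperEdgeColouring.eq_zero_of_degree_lt (hc : ProperEdgeColouring G c) {v : V}
    {p : ℝ[X]} (hp : p.degree < r)
    (hroots : r ≤ {u | G.Adj v u ∧ p.eval (c s(v, u)) = 0}.ncard) : p = 0 := by
  set A := {u | G.Adj v u ∧ p.eval (c s(v, u)) = 0}
  rcases A.finite_or_infinite with hA | hA
  · refine eq_zero_of_degree_lt_of_eval_index_eq_zero hA.toFinset
      ((hc.injOn_neighborSet v).mono fun u hu => ((Set.Finite.mem_toFinset hA).1 hu).1)
      (hp.trans_le ?_) fun u hu => ((Set.Finite.mem_toFinset hA).1 hu).2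
    rw [← Set.ncard_eq_toFinset_card A hA]
    exact_mod_cast hroots
  · rw [hA.ncard, Nat.le_zero] at hroots
    subst hroots
    exact degree_eq_bot.1 (Nat.WithBot.lt_zero_iff.1 hp)

lemma ProperEdgeColouring.eq_zero_of_mem_wspace (hc : ProperEdgeColouring G c) {F : Set (Sym2 V)}
    (hF : BondPercolates G r F) {φ : Sym2 V → ℝ} (hφ : φ ∈ Wspace G c r)
    (hφF : ∀ e ∈ F, φ e = 0) : φ = 0 := by
  obtain ⟨hφout, p, hdeg, heval⟩ := hφ
  have hedges : G.edgeSet ⊆ {e | φ e = 0} := by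
    refine hF _ hφF fun v hv w hvw => ?_
    have hroots : r ≤ {u | G.Adj v u ∧ (p v).eval (c s(v, u)) = 0}.ncard := by
      convert hv using 2
      exact Set.ext fun u => and_congr_right fun hu => by rw [heval v u hu]; rfl
    show φ s(v, w) = 0
    rw [← heval v w hvw, hc.eq_zero_of_degree_lt (hdeg v) hroots, eval_zero]
  funext e
  by_cases he : e ∈ G.edgeSet
  exacts [hedges he, hφout e he]

lemma finrank_wspace_le_card (hc : ProperEdgeColouring G c) {F : Finset (Sym2 V)}
    (hF : BondPercolates G r ↑F) : finrank ℝ (Wspace G c r) ≤ #F := by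
  let restrict := LinearMap.funLeft ℝ ℝ ((↑) : F → Sym2 V) ∘ₗ (Wspace G c r).subtype
  have hinj : Function.Injective restrict := by
    rw [← LinearMap.ker_eq_bot, LinearMap.ker_eq_bot']
    intro φ hφ
    refine Subtype.ext (hc.eq_zero_of_mem_wspace hF φ.2 fun e he => ?_)
    exact congrFun hφ ⟨e, he⟩
  simpa using LinearMap.finrank_le_finrank_of_injective hinj

lemma finrank_wspace_le_mEdge [Finite V] (hc : ProperEdgeColouring G c) :
    finrank ℝ (Wspace G c r) ≤ mEdge G r := by
  obtain ⟨F, -, hF, hcard⟩ := exists_bondPercolates_card_eq_mEdge G r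
  exact hcard ▸ finrank_wspace_le_card hc hF

lemma exists_mem_wspace {p : V → ℝ[X]} (hdeg : ∀ v, (p v).degree < r)
    (hcompat : ∀ v w, G.Adj v w → (p v).eval (c s(v, w)) = (p w).eval (c s(v, w))) :
    ∃ φ ∈ Wspace G c r, ∀ v w, G.Adj v w → φ s(v, w) = (p v).eval (c s(v, w)) := by
  classical
  let φ : Sym2 V → ℝ := Sym2.lift ⟨fun v w => if G.Adj v w then (p v).eval (c s(v, w)) else 0,
    fun v w => by
      dsimp only
      by_cases h : G.Adj v w
      · rw [if_pos h, if_pos h.symm, hcompat v w h, Sym2.eq_swap]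
      · rw [if_neg h, if_neg fun h' => h h'.symm]⟩
  have hφ : ∀ v w, G.Adj v w → φ s(v, w) = (p v).eval (c s(v, w)) := fun v w h => if_pos h
  refine ⟨φ, ⟨fun e he => ?_, p, hdeg, fun v w h => (hφ v w h).symm⟩, hφ⟩
  induction e using Sym2.ind with
  | _ v w => exact if_neg he

end PolynomialMethod

instance (d : ℕ) : DecidableRel (hypercube d).Adj :=
  fun x y => decidable_of_iff _ (Fintype.existsUnique_iff_card_one fun i => x i ≠ y i).symm

section Hypercube

variable {d : ℕ}

def flipAt (i : Fin d) (v : Fin d → Bool) : Fin d → Bool := Function.update v i (!v i)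

@[simp] lemma flipAt_self (i : Fin d) (v : Fin d → Bool) : flipAt i v i = !v i := by
  simp [flipAt]

lemma flipAt_of_ne {i j : Fin d} (h : j ≠ i) (v : Fin d → Bool) : flipAt i v j = v j := by
  simp [flipAt, h]

lemma flipAt_left_injective (v : Fin d → Bool) : Function.Injective (flipAt · v) := by
  intro i j h
  by_contra hij
  have := congrFun h i
  dsimp only at this
  rw [flipAt_self, flipAt_of_ne hij] at this
  exact Bool.not_ne_self _ this

lemma hypercube_adj_iff {v w : Fin d → Bool} : (hypercube d).Adj v w ↔ ∃ i, w = flipAt i v := by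
  constructor
  · rintro ⟨i, hi, hu⟩
    refine ⟨i, funext fun j => ?_⟩
    rcases eq_or_ne j i with rfl | hj
    · rw [flipAt_self]
      cases hv : v j <;> cases hw : w j <;> simp_all
    · rw [flipAt_of_ne hj]
      exact not_not.1 fun h => hj (hu j fun h' => h h'.symm)
  · rintro ⟨i, rfl⟩
    exact ⟨i, by simp, fun j hj => not_not.1 fun h => hj (flipAt_of_ne h v).symm⟩

lemma hypercube_neighborSet (v : Fin d → Bool) :
    (hypercube d).neighborSet v = Set.range (flipAt · v) := by
  ext w
  simp [hypercube_adj_iff, eq_comm]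

lemma ncard_hypercube_neighborSet (v : Fin d → Bool) :
    ((hypercube d).neighborSet v).ncard = d := by
  rw [hypercube_neighborSet, ← Set.image_univ,
    Set.ncard_image_of_injective _ (flipAt_left_injective v), Set.ncard_univ,
    Nat.card_eq_fintype_card, Fintype.card_fin]

lemma hypercube_degree (v : Fin d → Bool) : (hypercube d).degree v = d := by
  have h := ncard_hypercube_neighborSet v
  rwa [Set.ncard_eq_toFinset_card', Set.toFinset_card,
    SimpleGraph.card_neighborSet_eq_degree] at h

lemma card_edgeFinset_hypercube : #(hypercube d).edgeFinset = d * 2 ^ (d - 1) := by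
  have h := (hypercube d).sum_degrees_eq_twice_card_edges
  simp only [hypercube_degree, sum_const, card_univ, Fintype.card_bool, Fintype.card_fin,
    Fintype.card_fun, smul_eq_mul] at h
  rcases d with _ | d
  · simpa using h.symm
  · rw [pow_succ] at h
    simp only [Nat.add_sub_cancel]
    linarith

end Hypercube

section Layers

variable {m : ℕ}

lemma flipAt_castSucc_snoc (j : Fin m) (v : Fin m → Bool) (b : Bool) :
    flipAt j.castSucc (Fin.snoc v b : Fin (m + 1) → Bool) = Fin.snoc (flipAt j v) b := by
  simp [flipAt, Fin.snoc_update]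

lemma flipAt_last_snoc (v : Fin m → Bool) (b : Bool) :
    flipAt (Fin.last m) (Fin.snoc v b : Fin (m + 1) → Bool) = Fin.snoc v (!b) := by
  simp [flipAt, Fin.update_snoc_last]

lemma hypercube_adj_snoc_iff {v w : Fin m → Bool} {b b' : Bool} :
    (hypercube (m + 1)).Adj (Fin.snoc v b) (Fin.snoc w b') ↔
      (b' = b ∧ (hypercube m).Adj v w) ∨ (w = v ∧ b' = !b) := by
  simp only [hypercube_adj_iff (d := m + 1), Fin.exists_fin_succ', flipAt_castSucc_snoc,
    flipAt_last_snoc, Fin.snoc_injective2.eq_iff, hypercube_adj_iff (d := m), exists_and_right]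
  tauto

def hypercubeLayer (b : Bool) : hypercube m ↪g hypercube (m + 1) where
  toFun v := Fin.snoc v b
  inj' := Fin.snoc_left_injective (α := fun _ => Bool) b
  map_rel_iff' := by simp [hypercube_adj_snoc_iff]

@[simp] lemma hypercubeLayer_apply (b : Bool) (v : Fin m → Bool) :
    hypercubeLayer b v = Fin.snoc v b := rfl

lemma bondPercolates_hypercube_succ {r : ℕ} (hrm : r ≤ m) {F₀ F₁ : Set (Sym2 (Fin m → Bool))}
    (h₀ : BondPercolates (hypercube m) r F₀) (h₁ : BondPercolates (hypercube m) (r - 1) F₁) :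
    BondPercolates (hypercube (m + 1)) r
      (Sym2.map (hypercubeLayer false) '' F₀ ∪ Sym2.map (hypercubeLayer true) '' F₁) := by
  intro S hFS hS
  have hlayer₀ : (hypercube m).edgeSet ⊆ Sym2.map (hypercubeLayer false) ⁻¹' S :=
    h₀ _ (fun e he => hFS (Or.inl ⟨e, he, rfl⟩)) (hS.comap _ fun _ => Nat.zero_le _)
  have hcross : ∀ v, s(hypercubeLayer false v, hypercubeLayer true v) ∈ S := by
    intro v
    refine hS _ ?_ _ (hypercube_adj_snoc_iff.2 (Or.inr ⟨rfl, rfl⟩))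
    calc r ≤ ((hypercube m).neighborSet v).ncard := (ncard_hypercube_neighborSet v).symm ▸ hrm
      _ = (hypercubeLayer false '' (hypercube m).neighborSet v).ncard :=
        (Set.ncard_image_of_injective _ (hypercubeLayer false).injective).symm
      _ ≤ _ := Set.ncard_le_ncard ?_
    rintro _ ⟨u, hu, rfl⟩
    exact ⟨(hypercubeLayer false).map_adj_iff.2 hu, hlayer₀ (a := s(v, u)) hu⟩
  have hlayer₁ : (hypercube m).edgeSet ⊆ Sym2.map (hypercubeLayer true) ⁻¹' S := by
    refine h₁ _ (fun e he => hFS (Or.inr ⟨e, he, rfl⟩)) (hS.comap _ fun v => ?_)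
    refine Nat.one_le_iff_ne_zero.2
      (Set.ncard_ne_zero_of_mem (a := hypercubeLayer false v) ⟨?_, ?_, ?_⟩)
    · exact hypercube_adj_snoc_iff.2 (Or.inr ⟨rfl, rfl⟩)
    · rw [Sym2.eq_swap]
      exact hcross v
    · rintro ⟨w, hw⟩
      simpa using congrFun hw (Fin.last m)
  intro e he
  induction e using Sym2.ind with
  | _ x y =>
    obtain ⟨v, b, rfl⟩ : ∃ v b, x = Fin.snoc v b := ⟨_, _, (Fin.snoc_init_self x).symm⟩
    obtain ⟨w, b', rfl⟩ : ∃ w b', y = Fin.snoc w b' := ⟨_, _, (Fin.snoc_init_self y).symm⟩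
    rcases hypercube_adj_snoc_iff.1 he with ⟨rfl, hvw⟩ | ⟨rfl, rfl⟩
    · cases b'
      exacts [hlayer₀ (a := s(v, w)) hvw, hlayer₁ (a := s(v, w)) hvw]
    · cases b
      · exact hcross w
      · rw [Sym2.eq_swap]
        exact hcross w

lemma mEdge_hypercube_succ_le {r : ℕ} (hrm : r ≤ m) :
    mEdge (hypercube (m + 1)) r ≤ mEdge (hypercube m) r + mEdge (hypercube m) (r - 1) := by
  classical
  obtain ⟨F₀, hF₀G, hF₀, hcard₀⟩ := exists_bondPercolates_card_eq_mEdge (hypercube m) r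
  obtain ⟨F₁, hF₁G, hF₁, hcard₁⟩ := exists_bondPercolates_card_eq_mEdge (hypercube m) (r - 1)
  let F := F₀.image (Sym2.map (hypercubeLayer false)) ∪ F₁.image (Sym2.map (hypercubeLayer true))
  have hFG : ↑F ⊆ (hypercube (m + 1)).edgeSet := by
    simp only [F, coe_union, coe_image, Set.union_subset_iff, Set.image_subset_iff]
    exact ⟨fun e he => (hypercubeLayer false).map_mem_edgeSet_iff.2 (hF₀G he),
      fun e he => (hypercubeLayer true).map_mem_edgeSet_iff.2 (hF₁G he)⟩
  have hF : BondPercolates (hypercube (m + 1)) r ↑F := by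
    simpa only [F, coe_union, coe_image] using bondPercolates_hypercube_succ hrm hF₀ hF₁
  calc mEdge (hypercube (m + 1)) r ≤ #F := mEdge_le_card _ r hFG hF
    _ ≤ #F₀ + #F₁ := (card_union_le _ _).trans (add_le_add card_image_le card_image_le)
    _ = _ := by rw [hcard₀, hcard₁]

end Layers

def hypercubeBondNumber (d r : ℕ) : ℕ := ∑ k ∈ range r, d.choose k * (r - k)

lemma hypercubeBondNumber_succ_succ (d s : ℕ) :
    hypercubeBondNumber (d + 1) (s + 1) =
      hypercubeBondNumber d (s + 1) + hypercubeBondNumber d s := by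
  simp only [hypercubeBondNumber, sum_range_succ' _ s, Nat.choose_succ_succ', add_mul,
    sum_add_distrib, Nat.choose_zero_right, Nat.add_sub_add_right]
  ring

lemma hypercubeBondNumber_self (d : ℕ) : hypercubeBondNumber d d = d * 2 ^ (d - 1) := calc
  hypercubeBondNumber d d = ∑ k ∈ range (d + 1), d.choose k * (d - k) := by
    rw [sum_range_succ, Nat.sub_self, mul_zero, add_zero, hypercubeBondNumber]
  _ = ∑ j ∈ range (d + 1), j * d.choose j := by
    rw [← sum_range_reflect]
    refine sum_congr rfl fun j hj => ?_
    rw [mem_range] at hj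
    rw [Nat.add_sub_cancel, Nat.choose_symm (by omega), Nat.sub_sub_self (by omega), mul_comm]
  _ = d * 2 ^ (d - 1) := Nat.sum_range_mul_choose d

section LowerBound

open Lagrange

variable {d r : ℕ}

noncomputable def hypercubeColouring (d : ℕ) : Sym2 (Fin d → Bool) → ℝ :=
  Sym2.lift ⟨fun v w => ∑ i : Fin d, if v i ≠ w i then (i : ℝ) else 0,
    fun _ _ => sum_congr rfl fun _ _ => if_congr ne_comm rfl rfl⟩

lemma hypercubeColouring_flipAt (i : Fin d) (v : Fin d → Bool) :
    hypercubeColouring d s(v, flipAt i v) = i := by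
  show ∑ j : Fin d, (if v j ≠ flipAt i v j then (j : ℝ) else 0) = i
  rw [sum_eq_single i (fun j _ hj => by rw [flipAt_of_ne hj, if_neg (not_not.2 rfl)]) (by simp)]
  simp

lemma properEdgeColouring_hypercubeColouring :
    ProperEdgeColouring (hypercube d) (hypercubeColouring d) := by
  rintro e₁ he₁ e₂ he₂ hne ⟨v, hv₁, hv₂⟩
  obtain ⟨u₁, rfl⟩ := Sym2.mem_iff_exists.1 hv₁
  obtain ⟨u₂, rfl⟩ := Sym2.mem_iff_exists.1 hv₂
  obtain ⟨i, rfl⟩ : ∃ i, u₁ = flipAt i v := hypercube_adj_iff.1 he₁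
  obtain ⟨j, rfl⟩ : ∃ j, u₂ = flipAt j v := hypercube_adj_iff.1 he₂
  rw [hypercubeColouring_flipAt, hypercubeColouring_flipAt, Ne, Nat.cast_inj, Fin.val_inj]
  rintro rfl
  exact hne rfl

def walshChar (S : Finset (Fin d)) (v : Fin d → Bool) : ℝ :=
  ∏ j, if j ∈ S ∧ v j then -1 else 1

lemma walshChar_flipAt_of_notMem {S : Finset (Fin d)} {j : Fin d} (hj : j ∉ S)
    (v : Fin d → Bool) : walshChar S (flipAt j v) = walshChar S v := by
  refine prod_congr rfl fun k _ => ?_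
  rcases eq_or_ne k j with rfl | hk
  · simp [hj]
  · rw [flipAt_of_ne hk]

lemma sum_walshChar_mul (S T : Finset (Fin d)) :
    ∑ v, walshChar S v * walshChar T v = if S = T then 2 ^ d else 0 := by
  have hfactor : ∀ j, ∑ b : Bool, (if j ∈ S ∧ b then (-1 : ℝ) else 1) *
      (if j ∈ T ∧ b then -1 else 1) = if (j ∈ S ↔ j ∈ T) then 2 else 0 := by
    intro j
    by_cases hS : j ∈ S <;> by_cases hT : j ∈ T <;> norm_num [hS, hT]
  simp only [walshChar, ← prod_mul_distrib]
  rw [← Fintype.prod_sum (fun j (b : Bool) =>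
    (if j ∈ S ∧ b then (-1 : ℝ) else 1) * (if j ∈ T ∧ b then -1 else 1))]
  simp only [hfactor]
  split_ifs with hST
  · simp [hST]
  · obtain ⟨j, hj⟩ : ∃ j, ¬(j ∈ S ↔ j ∈ T) := by
      by_contra! h
      exact hST (Finset.ext h)
    exact prod_eq_zero (mem_univ j) (if_neg hj)

abbrev WalshIndex (d r : ℕ) := Σ S : Finset (Fin d), Fin (r - #S)

lemma card_walshIndex (hrd : r ≤ d) :
    Fintype.card (WalshIndex d r) = hypercubeBondNumber d r := by
  simp only [Fintype.card_sigma, Fintype.card_fin, ← powerset_univ]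
  rw [sum_powerset_apply_card (f := fun k => r - k), card_univ, Fintype.card_fin,
    hypercubeBondNumber]
  simp only [smul_eq_mul]
  refine (sum_subset (range_subset_range.2 (by omega)) fun k _ hk => ?_).symm
  rw [Nat.sub_eq_zero_of_le (by simpa using hk), mul_zero]

/-- The factor `nodal S` vanishes at each colour `j ∈ S`, the colours across which
`walshChar S` changes sign, so the system agrees along every edge. -/
noncomputable def walshSystem (i : WalshIndex d r) (v : Fin d → Bool) : ℝ[X] :=
  walshChar i.1 v • (nodal i.1 (fun j : Fin d => (j : ℝ)) * X ^ (i.2 : ℕ))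

lemma degree_walshSystem_lt (i : WalshIndex d r) (v : Fin d → Bool) :
    (walshSystem i v).degree < r := by
  refine (degree_smul_le _ _).trans_lt ?_
  rw [(monic_X_pow _).degree_mul, degree_nodal, degree_X_pow]
  exact_mod_cast (by omega : #i.1 + (i.2 : ℕ) < r)

lemma eval_walshSystem_eq_of_adj (i : WalshIndex d r) {v w : Fin d → Bool}
    (h : (hypercube d).Adj v w) :
    (walshSystem i v).eval (hypercubeColouring d s(v, w)) =
      (walshSystem i w).eval (hypercubeColouring d s(v, w)) := by
  obtain ⟨j, rfl⟩ := hypercube_adj_iff.1 h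
  rw [hypercubeColouring_flipAt]
  by_cases hj : j ∈ i.1
  · have hnode : (nodal i.1 fun j : Fin d => (j : ℝ)).eval (j : ℝ) = 0 :=
      eval_nodal_at_node (v := fun j : Fin d => (j : ℝ)) hj
    simp [walshSystem, hnode]
  · rw [walshSystem, walshSystem, walshChar_flipAt_of_notMem hj]

lemma sum_walshChar_smul_walshSystem (g : WalshIndex d r → ℝ) (S : Finset (Fin d)) :
    ∑ v, walshChar S v • ∑ i, g i • walshSystem i v =
      (2 ^ d : ℝ) • (nodal S (fun j : Fin d => (j : ℝ)) *
        ∑ k : Fin (r - #S), C (g ⟨S, k⟩) * X ^ (k : ℕ)) := by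
  have hcoeff : ∀ i : WalshIndex d r, ∑ v, walshChar S v * (g i * walshChar i.1 v) =
      g i * if S = i.1 then 2 ^ d else 0 := fun i => by
    rw [← sum_walshChar_mul, mul_sum]
    exact sum_congr rfl fun v _ => by ring
  simp only [walshSystem, smul_sum, smul_smul]
  rw [sum_comm]
  simp only [← sum_smul, hcoeff, Fintype.sum_sigma]
  rw [sum_eq_single S (fun T _ hT => sum_eq_zero fun k _ => by rw [if_neg hT.symm, mul_zero,
    zero_smul]) (by simp), mul_sum, smul_sum]
  refine sum_congr rfl fun k _ => ?_
  rw [if_pos rfl, smul_eq_C_mul, smul_eq_C_mul, C_mul]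
  ring

lemma linearIndependent_walshSystem :
    LinearIndependent ℝ (walshSystem : WalshIndex d r → (Fin d → Bool) → ℝ[X]) := by
  rw [Fintype.linearIndependent_iff]
  rintro g hg ⟨S, k⟩
  have hsum := sum_walshChar_smul_walshSystem g S
  have hv : ∀ v, ∑ i, g i • walshSystem i v = 0 := fun v => by simpa using congrFun hg v
  simp only [hv, smul_zero, sum_const_zero] at hsum
  have hcoeff := congrArg (coeff · k) ((mul_eq_zero.1 (smul_eq_zero.1 hsum.symm |>.resolve_left
    (by positivity))).resolve_left nodal_ne_zero)
  simpa [finsetSum_coeff, coeff_C_mul_X_pow, Fin.val_inj] using hcoeff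

lemma hypercubeBondNumber_le_finrank_wspace (hrd : r ≤ d) :
    hypercubeBondNumber d r ≤ finrank ℝ (Wspace (hypercube d) (hypercubeColouring d) r) := by
  choose φ hφW hφ using fun i =>
    exists_mem_wspace (degree_walshSystem_lt i) fun _ _ => eval_walshSystem_eq_of_adj i
  let ψ : WalshIndex d r → Wspace (hypercube d) (hypercubeColouring d) r := fun i => ⟨φ i, hφW i⟩
  have hψ : LinearIndependent ℝ ψ := by
    rw [Fintype.linearIndependent_iff]
    intro g hg
    refine Fintype.linearIndependent_iff.1 linearIndependent_walshSystem g (funext fun v => ?_)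
    simp only [Finset.sum_apply, Pi.smul_apply, Pi.zero_apply]
    have hzero : ∀ u, (hypercube d).Adj v u →
        (∑ i, g i • walshSystem i v).eval (hypercubeColouring d s(v, u)) = 0 := by
      intro u hu
      simpa [eval_finsetSum, hφ _ v u hu, ψ] using
        congrArg (fun φ : Wspace _ _ r => (φ : Sym2 (Fin d → Bool) → ℝ) s(v, u)) hg
    refine (properEdgeColouring_hypercubeColouring (d := d)).eq_zero_of_degree_lt (v := v)
      (mem_degreeLT.1 (sum_mem fun i _ => Submodule.smul_mem _ _
        (mem_degreeLT.2 (degree_walshSystem_lt i v)))) ?_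
    have hroots : {u | (hypercube d).Adj v u ∧
        (∑ i, g i • walshSystem i v).eval (hypercubeColouring d s(v, u)) = 0} =
        (hypercube d).neighborSet v :=
      Set.ext fun u => ⟨And.left, fun hu => ⟨hu, hzero u hu⟩⟩
    rwa [hroots, ncard_hypercube_neighborSet]
  simpa [card_walshIndex hrd] using hψ.fintype_card_le_finrank

end LowerBound

lemma hypercubeBondNumber_le_mEdge {d r : ℕ} (hrd : r ≤ d) :
    hypercubeBondNumber d r ≤ mEdge (hypercube d) r :=
  (hypercubeBondNumber_le_finrank_wspace hrd).trans
    (finrank_wspace_le_mEdge properEdgeColouring_hypercubeColouring)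

lemma mEdge_hypercube {d r : ℕ} (hrd : r ≤ d) :
    mEdge (hypercube d) r = hypercubeBondNumber d r := by
  refine le_antisymm ?_ (hypercubeBondNumber_le_mEdge hrd)
  induction d generalizing r with
  | zero => simp [Nat.le_zero.1 hrd]
  | succ m ih =>
    rcases hrd.eq_or_lt with rfl | hlt
    · rw [hypercubeBondNumber_self, ← card_edgeFinset_hypercube]
      exact mEdge_le_card_edgeFinset _ _
    rcases r with _ | s
    · simp
    calc mEdge (hypercube (m + 1)) (s + 1)
        ≤ mEdge (hypercube m) (s + 1) + mEdge (hypercube m) s := mEdge_hypercube_succ_le (by omega)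
      _ ≤ hypercubeBondNumber m (s + 1) + hypercubeBondNumber m s :=
        add_le_add (ih (by omega)) (ih (by omega))
      _ = hypercubeBondNumber (m + 1) (s + 1) := (hypercubeBondNumber_succ_succ m s).symm

/-- For `d > r ≥ 1`, `m_e(Q_d, r) = m_e(Q_{d-1}, r) + m_e(Q_{d-1}, r-1)`. -/
theorem stmt12 (d r : ℕ) (hr : 1 ≤ r) (hd : r < d) :
    mEdge (hypercube d) r = mEdge (hypercube (d - 1)) r + mEdge (hypercube (d - 1)) (r - 1) := by
  obtain ⟨m, rfl⟩ : ∃ m, d = m + 1 := ⟨d - 1, by omega⟩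
  obtain ⟨s, rfl⟩ : ∃ s, r = s + 1 := ⟨r - 1, by omega⟩
  rw [Nat.add_sub_cancel, Nat.add_sub_cancel, mEdge_hypercube hd.le, mEdge_hypercube (by omega),
    mEdge_hypercube (by omega)]
  exact hypercubeBondNumber_succ_succ m s
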